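/- arXiv:1310.6532 — 8 statements merged into one kernel-verified Lean document; each statement's English description precedes it below -/
import Mathlib

section
/- Let m ≥ 5 be an integer, let A_m be the alternating group on m letters, and let π : G₁ → A_m be a minimal cover of finite groups. Then the only subgroup of G₁ of index strictly less than m is G₁ itself. -/
/-!
A subgroup `K` of a simple group `G` is either all of `G` or has trivial normal core, and in
the latter case `G` acts faithfully on `G ⧸ K`, so `|G|` divides `[G : K]!`. Since
`|A_m| = m!/2 > (m-1)!`, every subgroup of `A_m` of index `< m` is `A_m` itself. For a minimal
cover `π : G₁ → A_m` the index of `π(H)` divides that of `H`, so a subgroup `H` of index `< m`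
maps onto `A_m`, hence `H = G₁` by minimality.
-/

open Nat

def MonoidHom.IsMinimalCover {G₁ G : Type*} [Group G₁] [Group G] (π : G₁ →* G) : Prop :=
  Function.Surjective π ∧ ∀ H : Subgroup G₁, H.map π = ⊤ → H = ⊤

namespace Subgroup

variable {G : Type*} [Group G]

theorem index_normalCore_dvd_factorial_index (H : Subgroup G) [H.FiniteIndex] :
    H.normalCore.index ∣ H.index ! := by
  rw [normalCore_eq_ker, index_ker, index_eq_card, ← Nat.card_perm]
  exact card_subgroup_dvd_card (MulAction.toPermHom G (G ⧸ H)).range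

theorem eq_top_of_factorial_index_lt_card [IsSimpleGroup G] (H : Subgroup G)
    (h : H.index ! < Nat.card G) : H = ⊤ := by
  have : Finite G := Nat.finite_of_card_ne_zero (by omega)
  rcases H.normalCore_normal.eq_bot_or_eq_top with hbot | htop
  · have hdvd := H.index_normalCore_dvd_factorial_index
    rw [hbot, index_bot] at hdvd
    exact absurd (Nat.le_of_dvd (factorial_pos _) hdvd) (not_le.mpr h)
  · exact top_le_iff.mp (htop ▸ H.normalCore_le)

end Subgroup

theorem alternatingGroup.eq_top_of_index_lt {α : Type*} [Fintype α] [DecidableEq α]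
    (hα : 5 ≤ Nat.card α) (K : Subgroup (alternatingGroup α)) (hK : K.index < Nat.card α) :
    K = ⊤ := by
  have := alternatingGroup.isSimpleGroup hα
  have : Nontrivial α := Finite.one_lt_card_iff_nontrivial.mp (by omega)
  refine K.eq_top_of_factorial_index_lt_card ?_
  obtain ⟨n, hn⟩ : ∃ n, Nat.card α = n + 1 := ⟨_, (Nat.succ_pred_eq_of_pos (by omega)).symm⟩
  have hcard : 2 * Nat.card (alternatingGroup α) = (n + 1) * n ! := by
    rw [two_mul_nat_card_alternatingGroup, Nat.card_perm, hn, factorial_succ]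
  have hfac : K.index ! ≤ n ! := factorial_le (by omega)
  nlinarith [factorial_pos n]

theorem MonoidHom.IsMinimalCover.eq_top_of_index_lt {G₁ G : Type*} [Group G₁] [Group G]
    [Finite G₁] {π : G₁ →* G} (hπ : π.IsMinimalCover) {m : ℕ}
    (hG : ∀ K : Subgroup G, K.index < m → K = ⊤) (H : Subgroup G₁) (hH : H.index < m) :
    H = ⊤ := by
  have hle : (H.map π).index ≤ H.index :=
    Nat.le_of_dvd (Nat.pos_of_ne_zero Subgroup.index_ne_zero_of_finite)
      (H.index_map_dvd hπ.1)
  exact hπ.2 H (hG _ (hle.trans_lt hH))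

/-- Let `m ≥ 5` be an integer and `π : G₁ → A_m` a minimal cover of finite groups. Then
the only subgroup of `G₁` of index strictly less than `m` is `G₁` itself. -/
theorem minimalCover_alternating_index_lt {G₁ : Type*} [Group G₁] [Finite G₁] (m : ℕ)
    (hm : 5 ≤ m) (π : G₁ →* alternatingGroup (Fin m)) (hsurj : Function.Surjective π)
    (hmin : ∀ H : Subgroup G₁, Subgroup.map π H = ⊤ → H = ⊤) :
    ∀ H : Subgroup G₁, H.index < m → H = ⊤ :=
  MonoidHom.IsMinimalCover.eq_top_of_index_lt ⟨hsurj, hmin⟩ fun K hK =>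
    alternatingGroup.eq_top_of_index_lt (by simpa using hm) K (by simpa using hK)
end

section
/- Let g ≥ 3 be an integer and let B be a finite set with 2g elements. Then 𝔽₂^B does not contain a proper nonzero Alt(B)-invariant 𝔽₂-linear subspace of even dimension. -/
/-!
Over a field `K` with fewer elements than `B`, every `Alt(B)`-invariant subspace `W` of `K^B` is
`Sym(B)`-invariant: a function `φ` takes equal values at some `c ≠ d`, so a transposition `(x y)`
acts on `φ` like the even permutation `(x y)(c d)`. For a `Sym(B)`-invariant `W`, either every
vector of `W` is constant, or some `φ ∈ W` has `φ a ≠ φ b` and then `φ ∘ (a b) - φ` is a nonzero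
multiple of `e_a - e_b`; by 2-transitivity `W` then contains all `e_x - e_y`, which span the
sum-zero hyperplane. Hence `dim W ∈ {0, 1, |B| - 1, |B|}`, and for `|B|` even the proper nonzero
cases have odd dimension.
-/

open Equiv Equiv.Perm Module

theorem apply_swap_eq_self_of_apply_eq {B M : Type*} [DecidableEq B] {φ : B → M} {c d : B}
    (h : φ c = φ d) (x : B) : φ (swap c d x) = φ x := by
  rw [swap_apply_def]
  split_ifs with hc hd
  · rw [hc, h]
  · rw [hd, h]
  · rfl

theorem apply_swap_sub_self {B R : Type*} [DecidableEq B] [Ring R] (φ : B → R)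
    (a b : B) :
    (fun t => φ (swap a b t)) - φ = (φ b - φ a) • (Pi.single a 1 - Pi.single b 1) := by
  ext t
  rcases eq_or_ne a b with rfl | hab
  · simp
  simp only [Pi.sub_apply, Pi.smul_apply, smul_eq_mul, swap_apply_def]
  split_ifs with ha hb <;> simp [*, hab.symm]

namespace Submodule

variable {K B : Type*}

def IsPermInvariant [Semiring K] (W : Submodule K (B → K)) (G : Subgroup (Perm B)) : Prop :=
  ∀ σ ∈ G, ∀ φ ∈ W, (fun b => φ (σ⁻¹ b)) ∈ W

section AlternatingGroup

variable [Fintype B] [DecidableEq B] [Semiring K] [Fintype K] {W : Submodule K (B → K)}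

theorem IsPermInvariant.apply_swap_mem (hW : W.IsPermInvariant (alternatingGroup B))
    (hK : Fintype.card K < Fintype.card B) {φ : B → K} (hφ : φ ∈ W) (x y : B) :
    (fun b => φ (swap x y b)) ∈ W := by
  rcases eq_or_ne x y with rfl | hxy
  · simpa using hφ
  obtain ⟨c, d, hcd, hφcd⟩ := Fintype.exists_ne_map_eq_of_card_lt φ hK
  have hσ : swap x y * swap c d ∈ alternatingGroup B := by
    simp [mem_alternatingGroup, sign_swap hxy, sign_swap hcd]
  convert hW _ hσ φ hφ using 2 with b
  simp [apply_swap_eq_self_of_apply_eq hφcd]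

theorem IsPermInvariant.of_alternatingGroup (hW : W.IsPermInvariant (alternatingGroup B))
    (hK : Fintype.card K < Fintype.card B) : W.IsPermInvariant ⊤ := by
  rintro σ -
  induction σ using swap_induction_on with
  | one => simp
  | swap_mul σ x y _ ih =>
    intro φ hφ
    simpa using hW.apply_swap_mem hK (ih φ hφ) x y

end AlternatingGroup

theorem le_span_one_of_forall_apply_eq [Semiring K] {W : Submodule K (B → K)}
    (h : ∀ φ ∈ W, ∀ a b, φ a = φ b) : W ≤ K ∙ 1 := by
  intro φ hφ
  rcases isEmpty_or_nonempty B with hB | ⟨⟨b₀⟩⟩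
  · simp [Subsingleton.elim φ 0]
  exact mem_span_singleton.mpr ⟨φ b₀, funext fun b => by simp [h φ hφ b b₀]⟩

section Field

variable [DecidableEq B] [Field K] {W : Submodule K (B → K)}

theorem IsPermInvariant.single_sub_single_mem (hW : W.IsPermInvariant ⊤) {φ : B → K}
    (hφ : φ ∈ W) {a b : B} (hab : φ a ≠ φ b) (x y : B) :
    Pi.single x 1 - Pi.single y 1 ∈ W := by
  rcases eq_or_ne x y with rfl | hxy
  · simp
  obtain ⟨σ, hσa, hσb⟩ := (MulAction.is_two_pretransitive_iff.mp
    (isMultiplyPretransitive B 2)) (ne_of_apply_ne φ hab) hxy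
  rw [Perm.smul_def] at hσa hσb
  set ψ : B → K := fun t => φ (σ⁻¹ t)
  have hψ : ψ ∈ W := hW σ trivial φ hφ
  have hψxy : ψ y - ψ x ≠ 0 := by
    simpa [ψ, ← hσa, ← hσb, sub_eq_zero] using hab.symm
  have := W.smul_mem (ψ y - ψ x)⁻¹ (W.sub_mem (hW (swap x y) trivial ψ hψ) hψ)
  rwa [swap_inv, apply_swap_sub_self, inv_smul_smul₀ hψxy] at this

end Field

section Augmentation

variable [Fintype B] [Field K]

def augmentation : (B → K) →ₗ[K] K := ∑ b, LinearMap.proj b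

theorem augmentation_apply (φ : B → K) : augmentation φ = ∑ b, φ b := by
  simp [augmentation]

theorem finrank_ker_augmentation [Nonempty B] :
    finrank K (LinearMap.ker (augmentation : (B → K) →ₗ[K] K)) = Fintype.card B - 1 := by
  classical
  have hsurj : Function.Surjective (augmentation : (B → K) →ₗ[K] K) := fun c =>
    ⟨Pi.single (Classical.arbitrary B) c, by simp [augmentation_apply]⟩
  have := LinearMap.finrank_range_add_finrank_ker (augmentation : (B → K) →ₗ[K] K)
  rw [LinearMap.range_eq_top.mpr hsurj, finrank_top, finrank_self,
    finrank_fintype_fun_eq_card] at this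
  omega

variable [DecidableEq B] {W : Submodule K (B → K)}

theorem ker_augmentation_le (h : ∀ x y : B, Pi.single x 1 - Pi.single y 1 ∈ W) :
    LinearMap.ker augmentation ≤ W := by
  intro χ hχ
  rw [LinearMap.mem_ker, augmentation_apply] at hχ
  rcases isEmpty_or_nonempty B with hB | ⟨⟨b₀⟩⟩
  · simp [Subsingleton.elim χ 0]
  have : χ = ∑ t, χ t • (Pi.single t 1 - Pi.single b₀ 1) := by
    simp only [smul_sub, Finset.sum_sub_distrib, ← Finset.sum_smul, hχ, zero_smul, sub_zero]
    exact pi_eq_sum_univ' χ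
  rw [this]
  exact W.sum_mem fun t _ => W.smul_mem _ (h t b₀)

theorem IsPermInvariant.le_span_one_or_ker_augmentation_le (hW : W.IsPermInvariant ⊤) :
    W ≤ K ∙ 1 ∨ LinearMap.ker augmentation ≤ W := by
  by_cases h : ∀ φ ∈ W, ∀ a b, φ a = φ b
  · exact .inl (le_span_one_of_forall_apply_eq h)
  push Not at h
  obtain ⟨φ, hφ, a, b, hab⟩ := h
  exact .inr (ker_augmentation_le (hW.single_sub_single_mem hφ hab))

end Augmentation

end Submodule

open Submodule

/-- Let `g ≥ 3` and let `B` be a finite set with `2g` elements. Then `𝔽₂^B` contains no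
proper nonzero `Alt(B)`-invariant `𝔽₂`-linear subspace of even dimension.  Here `Alt(B)`
acts on `𝔽₂^B` by `(σ · φ)(b) = φ(σ⁻¹ b)`. -/
theorem alt_invariant_subspace_not_even {B : Type*} [Fintype B] [DecidableEq B]
    (g : ℕ) (hg : 3 ≤ g) (hB : Fintype.card B = 2 * g)
    (W : Submodule (ZMod 2) (B → ZMod 2))
    (hinv : ∀ σ ∈ alternatingGroup B, ∀ φ ∈ W, (fun b => φ (σ⁻¹ b)) ∈ W)
    (hbot : W ≠ ⊥) (htop : W ≠ ⊤) :
    ¬ Even (Module.finrank (ZMod 2) W) := by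
  have hK : Fintype.card (ZMod 2) < Fintype.card B := by rw [ZMod.card, hB]; omega
  have : Nonempty B := Fintype.card_pos_iff.mp (by omega)
  have hW₀ : finrank (ZMod 2) W ≠ 0 := fun h => hbot (finrank_eq_zero.mp h)
  have hWn : finrank (ZMod 2) W < 2 * g := by
    simpa [hB] using finrank_lt htop
  have hW : finrank (ZMod 2) W ≤ 1 ∨ 2 * g - 1 ≤ finrank (ZMod 2) W := by
    rcases (IsPermInvariant.of_alternatingGroup hinv hK).le_span_one_or_ker_augmentation_le
      with hle | hle
    · left
      simpa using (finrank_mono hle).trans (finrank_span_le_card ({1} : Set (B → ZMod 2)))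
    · right
      simpa [finrank_ker_augmentation, hB] using finrank_mono hle
  rintro ⟨r, hr⟩
  omega
end

section
/- Let Ω/F be a field extension and let E and F₁ be intermediate fields of Ω/F such that E/F is a finite Galois extension whose Galois group Gal(E/F) is a simple nonabelian group, and F₁/F is a finite Galois extension with solvable Galois group. Then E and F₁ are linearly disjoint over F; in particular E ∩ F₁ = F, and the restriction homomorphism from the Galois group of the compositum E·F₁ over F₁ to Gal(E/F) is a group isomorphism. -/
/-!
A Galois subextension of both `E` and `F₁` has a Galois group that is a quotient of the simple
nonabelian group `Gal(E/F)` and of the solvable group `Gal(F₁/F)`; a simple nonabelian group has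
no nontrivial solvable quotient, so `E ⊓ F₁ = F`. Since `E/F` is Galois, this already gives
linear disjointness. Over `F₁` the compositum is `F₁(E)`, which is Galois since it is generated
by the roots of a separable polynomial with splitting field `E`; restriction to `E` is injective
because `E` generates it, and surjective because an element of `E` fixed by the image is fixed
by `Gal(F₁(E)/F₁)`, hence lies in `E ⊓ F₁ = F`.
-/

open IntermediateField

theorem IsSimpleGroup.subsingleton_of_surjective_of_isSolvable {G H : Type*} [Group G] [Group H]
    [IsSimpleGroup G] (hG : ¬ ∀ x y : G, x * y = y * x) [Group.IsSolvable H] {f : G →* H}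
    (hf : Function.Surjective f) : Subsingleton H := by
  rcases IsSimpleGroup.eq_bot_or_eq_top_of_normal f.ker f.normal_ker with hker | hker
  · have : Group.IsSolvable G :=
      Group.isSolvable_of_isSolvable_injective ((MonoidHom.ker_eq_bot_iff f).mp hker)
    exact absurd (IsSimpleGroup.comm_iff_isSolvable.mpr this) hG
  · refine ⟨fun a b => ?_⟩
    obtain ⟨x, rfl⟩ := hf a
    obtain ⟨y, rfl⟩ := hf b
    simp only [MonoidHom.ker_eq_top_iff.mp hker, MonoidHom.one_apply]

namespace IntermediateField

variable {F Ω : Type*} [Field F] [Field Ω] [Algebra F Ω]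

theorem eq_bot_of_subsingleton_algEquiv (K : IntermediateField F Ω) [FiniteDimensional F K]
    [IsGalois F K] [Subsingleton Gal(K/F)] : K = ⊥ :=
  finrank_eq_one_iff.mp <| by rw [← IsGalois.card_aut_eq_finrank, Nat.card_of_subsingleton 1]

noncomputable def restrictNormalHomOfLE {K L : IntermediateField F Ω} (h : K ≤ L) [Normal F K] :
    Gal(L/F) →* Gal(K/F) :=
  letI := (inclusion h).toAlgebra
  haveI : IsScalarTower F K L := .of_algebraMap_eq fun _ => rfl
  AlgEquiv.restrictNormalHom K

theorem restrictNormalHomOfLE_surjective {K L : IntermediateField F Ω} (h : K ≤ L) [Normal F K]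
    [Normal F L] : Function.Surjective (restrictNormalHomOfLE h) :=
  letI := (inclusion h).toAlgebra
  haveI : IsScalarTower F K L := .of_algebraMap_eq fun _ => rfl
  AlgEquiv.restrictNormalHom_surjective L

theorem restrictNormalHomOfLE_apply {K L : IntermediateField F Ω} (h : K ≤ L) [Normal F K]
    (σ : Gal(L/F)) (x : K) : (restrictNormalHomOfLE h σ x : Ω) = σ (inclusion h x) :=
  letI := (inclusion h).toAlgebra
  haveI : IsScalarTower F K L := .of_algebraMap_eq fun _ => rfl
  congrArg Subtype.val (AlgEquiv.restrictNormal_commutes σ K x)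

theorem inf_eq_bot_of_isSimpleGroup_of_isSolvable (E L : IntermediateField F Ω)
    [FiniteDimensional F E] [IsGalois F E] [IsSimpleGroup Gal(E/F)]
    (hE : ¬ ∀ x y : Gal(E/F), x * y = y * x) [IsGalois F L] [Group.IsSolvable Gal(L/F)] :
    E ⊓ L = ⊥ := by
  have : Group.IsSolvable Gal(↥(E ⊓ L)/F) :=
    Group.isSolvable_of_surjective (restrictNormalHomOfLE_surjective (inf_le_right : E ⊓ L ≤ L))
  have := IsSimpleGroup.subsingleton_of_surjective_of_isSolvable hE
    (restrictNormalHomOfLE_surjective (inf_le_left : E ⊓ L ≤ E))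
  exact eq_bot_of_subsingleton_algEquiv _

theorem extendScalars_sup_right_eq_adjoin (K L : IntermediateField F Ω) :
    extendScalars (le_sup_right : L ≤ K ⊔ L) = adjoin L (K : Set Ω) :=
  restrictScalars_injective F <| by
    rw [extendScalars_restrictScalars, restrictScalars_adjoin_eq_sup, adjoin_self, sup_comm]

theorem isGalois_adjoin_of_isGalois (K L : IntermediateField F Ω) [FiniteDimensional F K]
    [IsGalois F K] : IsGalois L (adjoin L (K : Set Ω)) := by
  obtain ⟨p, hp, hsplit⟩ := IsGalois.is_separable_splitting_field F K
  obtain ⟨hsplits, hK⟩ := isSplittingField_iff.mp hsplit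
  have hsplitsΩ : ((p.map (algebraMap F L)).map (algebraMap L Ω)).Splits := by
    rw [Polynomial.map_map, ← IsScalarTower.algebraMap_eq, IsScalarTower.algebraMap_eq F K Ω,
      ← Polynomial.map_map]
    exact hsplits.map _
  have hroots : (p.map (algebraMap F L)).rootSet Ω = p.rootSet Ω := by
    simp only [Polynomial.rootSet, Polynomial.aroots_map]
  have hadjoin : adjoin L (K : Set Ω) = adjoin L ((p.map (algebraMap F L)).rootSet Ω) :=
    restrictScalars_injective F <| by
      rw [restrictScalars_adjoin_eq_sup, restrictScalars_adjoin_eq_sup, adjoin_self, hroots, ← hK]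
  rw [hadjoin]
  have := adjoin_rootSet_isSplittingField (p := p.map (algebraMap F L)) hsplitsΩ
  exact IsGalois.of_separable_splitting_field (p := p.map (algebraMap F L)) hp.map

section Compositum

variable {K L : IntermediateField F Ω} {M : IntermediateField L Ω}

noncomputable def restrictScalarsRestrictNormalHom (h : K ≤ M.restrictScalars F) [Normal F K] :
    Gal(M/L) →* Gal(K/F) :=
  (restrictNormalHomOfLE h).comp (AlgEquiv.restrictScalarsHom (S := L) (A := M) F)

theorem restrictScalarsRestrictNormalHom_apply (h : K ≤ M.restrictScalars F) [Normal F K]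
    (σ : Gal(M/L)) (x : K) :
    (restrictScalarsRestrictNormalHom h σ x : Ω) = σ ⟨x, h x.2⟩ :=
  restrictNormalHomOfLE_apply h _ x

theorem restrictScalarsRestrictNormalHom_injective (h : K ≤ M.restrictScalars F) [Normal F K]
    (hM : M = adjoin L (K : Set Ω)) :
    Function.Injective (restrictScalarsRestrictNormalHom h) := by
  refine (injective_iff_map_eq_one _).mpr fun σ hσ => AlgEquiv.ext fun y => ?_
  have hfix : (σ : M →ₐ[L] M) = AlgHom.id L M := algHom_ext_of_eq_adjoin L hM fun x hx => by
    have := restrictScalarsRestrictNormalHom_apply h σ ⟨x, hx⟩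
    rw [hσ] at this
    exact Subtype.ext this.symm
  exact DFunLike.congr_fun hfix y

theorem restrictScalarsRestrictNormalHom_surjective (h : K ≤ M.restrictScalars F)
    [FiniteDimensional F K] [IsGalois F K] (hM : M = adjoin L (K : Set Ω)) (hKL : K ⊓ L = ⊥) :
    Function.Surjective (restrictScalarsRestrictNormalHom h) := by
  have : IsGalois L M := hM ▸ isGalois_adjoin_of_isGalois K L
  set f := restrictScalarsRestrictNormalHom (M := M) h
  suffices fixedField f.range = ⊥ from
    MonoidHom.range_eq_top.mp <| fixingSubgroup_fixedField f.range ▸ this ▸ fixingSubgroup_bot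
  refine eq_bot_iff.mpr fun x hx => ?_
  obtain ⟨y, hy⟩ : (⟨x, h x.2⟩ : M) ∈ Set.range (algebraMap L M) :=
    (InfiniteGalois.mem_range_algebraMap_iff_fixed _).mpr fun σ => by
      have := restrictScalarsRestrictNormalHom_apply h σ x
      rw [(mem_fixedField_iff _ _).mp hx (f σ) ⟨σ, rfl⟩] at this
      exact Subtype.ext this.symm
  have hxKL : (x : Ω) ∈ K ⊓ L := ⟨x.2, congrArg Subtype.val hy ▸ y.2⟩
  rw [hKL] at hxKL
  obtain ⟨r, hr⟩ := mem_bot.mp hxKL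
  exact mem_bot.mpr ⟨r, Subtype.ext hr⟩

end Compositum

end IntermediateField

/-- Let `E` and `F₁` be intermediate fields of `Ω/F` with `E/F` finite Galois with simple
nonabelian Galois group, and `F₁/F` finite Galois with solvable Galois group. Then `E`
and `F₁` are linearly disjoint over `F`; in particular `E ∩ F₁ = F`, and the restriction
homomorphism from `Gal(E·F₁/F₁)` to `Gal(E/F)` is a group isomorphism. -/
theorem linearDisjoint_of_simple_nonabelian_galois
    {F Ω : Type*} [Field F] [Field Ω] [Algebra F Ω]
    (E F₁ : IntermediateField F Ω)
    [FiniteDimensional F E] [IsGalois F E]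
    (hsimple : IsSimpleGroup (↥E ≃ₐ[F] ↥E))
    (hnonab : ¬ ∀ x y : (↥E ≃ₐ[F] ↥E), x * y = y * x)
    [FiniteDimensional F F₁] [IsGalois F F₁]
    (hsolv : IsSolvable (↥F₁ ≃ₐ[F] ↥F₁)) :
    E.LinearDisjoint F₁ ∧ E ⊓ F₁ = ⊥ ∧
      ∃ res : (↥(IntermediateField.extendScalars (le_sup_right : F₁ ≤ E ⊔ F₁)) ≃ₐ[↥F₁]
                ↥(IntermediateField.extendScalars (le_sup_right : F₁ ≤ E ⊔ F₁))) →*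
              (↥E ≃ₐ[F] ↥E),
        (∀ σ (x : Ω) (hx : x ∈ E)
            (hx' : x ∈ IntermediateField.extendScalars (le_sup_right : F₁ ≤ E ⊔ F₁)),
          (↑(res σ ⟨x, hx⟩) : Ω) = ↑(σ ⟨x, hx'⟩)) ∧
        Function.Bijective res := by
  have := hsimple
  have : Group.IsSolvable Gal(F₁/F) := hsolv
  have hinf : E ⊓ F₁ = ⊥ := inf_eq_bot_of_isSimpleGroup_of_isSolvable E F₁ hnonab
  have hM := extendScalars_sup_right_eq_adjoin E F₁
  have h : E ≤ (extendScalars (le_sup_right : F₁ ≤ E ⊔ F₁)).restrictScalars F := le_sup_left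
  exact ⟨.of_inf_eq_bot hinf, hinf, restrictScalarsRestrictNormalHom h,
    fun σ x hx _ => restrictScalarsRestrictNormalHom_apply h σ ⟨x, hx⟩,
    restrictScalarsRestrictNormalHom_injective h hM,
    restrictScalarsRestrictNormalHom_surjective h hM hinf⟩
end

section
/- Let k be a perfect field, K a finitely generated field extension of k, and k′ the algebraic closure of k in K. Let κ be a field extension of k′ of finite degree. Then the tensor product K ⊗_{k′} κ is a field, and the field extension (K ⊗_{k′} κ)/K (where K is embedded as K ⊗ 1) has degree [κ : k′]. -/
/-!
Since `k` is perfect, so is its algebraic extension `k′`, hence `κ / k′` is separable and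
`κ ≅ k′[X] / (f)` for the minimal polynomial `f` of a primitive element. Then
`K ⊗_{k′} κ ≅ K[X] / (f)`, and `f` stays irreducible over `K`: the coefficients of a monic
factor of `f` in `K[X]` are integral over `k′` (they are polynomials in the roots of `f`),
so they lie in `k′`, which is algebraically closed in `K`. The degree is that of any base change.
-/

open TensorProduct Polynomial

theorem Polynomial.Monic.exists_monic_map_eq_of_dvd_map {R K : Type*} [CommRing R] [Field K]
    [Algebra R K] [IsIntegrallyClosedIn R K] {f : R[X]} (hf : f.Monic) {g : K[X]}
    (hg : g.Monic) (hdvd : g ∣ f.map (algebraMap R K)) :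
    ∃ g₀ : R[X], g₀.map (algebraMap R K) = g ∧ g₀.natDegree = g.natDegree ∧ g₀.Monic := by
  refine lifts_and_natDegree_eq_and_monic ?_ hg
  have hlifts := integralClosure.mem_lifts_of_monic_of_dvd_map K hf hg hdvd
  rw [lifts_iff_coeff_lifts] at hlifts ⊢
  intro n
  obtain ⟨y, hy⟩ := hlifts n
  exact IsIntegrallyClosedIn.algebraMap_eq_of_integral (hy ▸ y.2)

theorem Polynomial.Monic.irreducible_map_of_isIntegrallyClosedIn {R K : Type*} [CommRing R]
    [IsDomain R] [Field K] [Algebra R K] [IsIntegrallyClosedIn R K] {f : R[X]} (hf : f.Monic)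
    (hirr : Irreducible f) : Irreducible (f.map (algebraMap R K)) := by
  have hinj : Function.Injective (Polynomial.map (algebraMap R K)) :=
    map_injective _ (IsIntegralClosure.algebraMap_injective R R K)
  rw [hf.irreducible_iff_natDegree] at hirr
  rw [(hf.map _).irreducible_iff_natDegree]
  refine ⟨fun h ↦ hirr.1 (hinj (by rwa [Polynomial.map_one])), fun a b ha hb hab ↦ ?_⟩
  obtain ⟨a₀, rfl, ha₀, ha₀m⟩ := hf.exists_monic_map_eq_of_dvd_map ha (Dvd.intro b hab)
  obtain ⟨b₀, rfl, hb₀, hb₀m⟩ := hf.exists_monic_map_eq_of_dvd_map hb (Dvd.intro_left _ hab)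
  rw [← ha₀, ← hb₀]
  exact hirr.2 a₀ b₀ ha₀m hb₀m (hinj (by rw [Polynomial.map_mul, hab]))

instance algebraicClosure.isIntegrallyClosedIn (F E : Type*) [Field F] [Field E] [Algebra F E] :
    IsIntegrallyClosedIn (algebraicClosure F E) E := by
  rw [← IsIntegrallyClosedIn.integralClosure_eq_bot_iff _ (FaithfulSMul.algebraMap_injective _ E),
    ← algebraicClosure_toSubalgebra, algebraicClosure.algebraicClosure_eq_bot,
    IntermediateField.bot_toSubalgebra]

noncomputable def AdjoinRoot.tensorAlgEquivMap (R T : Type*) [CommRing R] [CommRing T]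
    [Algebra R T] (f : R[X]) :
    T ⊗[R] AdjoinRoot f ≃ₐ[T] AdjoinRoot (f.map (algebraMap R T)) :=
  (AdjoinRoot.tensorAlgEquiv f _ rfl).trans <|
    AdjoinRoot.mapAlgEquiv (Algebra.TensorProduct.rid R T T) _ _
      (.of_eq <| by rw [Polynomial.map_map]; congr 1; ext; simp [Algebra.smul_def])

theorem Algebra.TensorProduct.isField_of_isIntegrallyClosedIn (F E L : Type*) [Field F]
    [Field E] [Algebra F E] [IsIntegrallyClosedIn F E] [Field L] [Algebra F L]
    [FiniteDimensional F L] [Algebra.IsSeparable F L] : IsField (E ⊗[F] L) := by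
  set pb := Field.powerBasisOfFiniteOfSeparable F L
  have hint : IsIntegral F pb.gen := pb.isIntegral_gen
  let f := minpoly F pb.gen
  have : Fact (Irreducible (f.map (algebraMap F E))) :=
    ⟨(minpoly.monic hint).irreducible_map_of_isIntegrallyClosedIn (minpoly.irreducible hint)⟩
  let eL : AdjoinRoot f ≃ₐ[F] L :=
    AdjoinRoot.equiv' f pb (by rw [AdjoinRoot.aeval_eq, AdjoinRoot.mk_self]) (minpoly.aeval _ _)
  let e : E ⊗[F] L ≃ₐ[E] AdjoinRoot (f.map (algebraMap F E)) :=
    (Algebra.TensorProduct.congr AlgEquiv.refl eL.symm).trans (AdjoinRoot.tensorAlgEquivMap F E f)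
  exact e.toMulEquiv.isField (Field.toIsField _)

theorem tensor_with_finite_extension_isField_general
    {k K : Type*} [Field k] [PerfectField k] [Field K] [Algebra k K]
    (κ : Type*) [Field κ] [Algebra (algebraicClosure k K) κ]
    [FiniteDimensional (algebraicClosure k K) κ] :
    IsField (K ⊗[algebraicClosure k K] κ) ∧
      Module.finrank K (K ⊗[algebraicClosure k K] κ) =
        Module.finrank (algebraicClosure k K) κ := by
  have : PerfectField (algebraicClosure k K) := Algebra.IsAlgebraic.perfectField k
  exact ⟨Algebra.TensorProduct.isField_of_isIntegrallyClosedIn _ K κ, Module.finrank_baseChange⟩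

/-- Let `k` be a perfect field, `K` a finitely generated field extension of `k`, and `k′`
the algebraic closure of `k` in `K` (the intermediate field of all elements of `K`
algebraic over `k`). Let `κ` be a field extension of `k′` of finite degree. Then
`K ⊗_{k′} κ` is a field, and the field extension `(K ⊗_{k′} κ)/K` (where `K` is embedded
as `K ⊗ 1`) has degree `[κ : k′]`. -/
theorem tensor_with_finite_extension_isField
    {k K : Type*} [Field k] [PerfectField k] [Field K] [Algebra k K]
    (hfg : ∃ s : Finset K, IntermediateField.adjoin k (s : Set K) = ⊤)
    (κ : Type*) [Field κ] [Algebra (algebraicClosure k K) κ]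
    [FiniteDimensional (algebraicClosure k K) κ] :
    IsField (K ⊗[algebraicClosure k K] κ) ∧
      Module.finrank K (K ⊗[algebraicClosure k K] κ) =
        Module.finrank (algebraicClosure k K) κ :=
  tensor_with_finite_extension_isField_general κ
end

section
/- Let k be a perfect field, K a finitely generated field extension of k, and k′ the algebraic closure of k in K. Fix an algebraic closure Ω of K and let κ ⊆ Ω be a finite Galois extension of k′. Then the compositum K·κ inside Ω is a finite Galois extension of K of degree [κ : k′], and the restriction homomorphism Gal(K·κ/K) → Gal(κ/k′) is a group isomorphism. -/
/-!
Write `κ` as the splitting field over `k'` of a separable polynomial `T`; then `K(κ)` is the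
splitting field of `T` over `K`, hence finite Galois over `K`. Restricting automorphisms of
`K(κ)/K` to the normal extension `κ/k'` is injective because `κ` generates `K(κ)` over `K`.
The fixed field of the image is `κ ∩ K`, which is `k'` because `κ` is algebraic over `k'` and
`k'` is algebraically closed in `K`; by the Galois correspondence the restriction is onto, and
comparing group orders gives `[K(κ) : K] = [κ : k']`.
-/

open IntermediateField Polynomial

namespace IntermediateField

variable {F K Ω : Type*} [Field F] [Field K] [Field Ω] [Algebra F K] [Algebra F Ω] [Algebra K Ω]
  [IsScalarTower F K Ω] {κ : IntermediateField F Ω}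

variable (K) in
theorem isSplittingField_adjoin_of_isSplittingField {T : F[X]} (hT : T.IsSplittingField F κ) :
    (T.map (algebraMap F K)).IsSplittingField K (adjoin K (κ : Set Ω)) := by
  rw [isSplittingField_iff] at hT
  have hroots : (T.map (algebraMap F K)).rootSet Ω = T.rootSet Ω := by
    simp [Set.ext_iff, mem_rootSet']
  have hsplits : ((T.map (algebraMap F K)).map (algebraMap K Ω)).Splits := by
    rw [Polynomial.map_map, ← IsScalarTower.algebraMap_eq, IsScalarTower.algebraMap_eq F κ Ω,
      ← Polynomial.map_map]
    exact hT.1.map _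
  rw [hT.2, adjoin_adjoin_right, ← hroots]
  exact adjoin_rootSet_isSplittingField hsplits

instance finiteDimensional_adjoin_of_normal [FiniteDimensional F κ] [Normal F κ] :
    FiniteDimensional K (adjoin K (κ : Set Ω)) :=
  have ⟨T, hT⟩ := Normal.exists_isSplittingField F κ
  have := isSplittingField_adjoin_of_isSplittingField K hT
  IsSplittingField.finiteDimensional _ (T.map (algebraMap F K))

instance isGalois_adjoin_of_isGalois_s10 [FiniteDimensional F κ] [IsGalois F κ] :
    IsGalois K (adjoin K (κ : Set Ω)) :=
  have ⟨T, hsep, hT⟩ := IsGalois.is_separable_splitting_field F κ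
  have := isSplittingField_adjoin_of_isSplittingField K hT
  IsGalois.of_separable_splitting_field (p := T.map (algebraMap F K)) hsep.map

variable (K κ) in
theorem le_restrictScalars_adjoin : κ ≤ (adjoin K (κ : Set Ω)).restrictScalars F :=
  subset_adjoin K (κ : Set Ω)

variable (K) in
noncomputable def restrictToNormal [Normal F κ] :
    Gal(adjoin K (κ : Set Ω) / K) →* Gal(κ / F) :=
  let res (σ : Gal(adjoin K (κ : Set Ω) / K)) : Gal(κ / F) := AlgHom.restrictNormal'
    (((adjoin K (κ : Set Ω)).val.restrictScalars F).comp
      ((σ.toAlgHom.restrictScalars F).comp (inclusion (le_restrictScalars_adjoin K κ)))) κ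
  have coe_res σ (x : κ) : (res σ x : Ω) = σ ⟨x, le_restrictScalars_adjoin K κ x.2⟩ :=
    AlgHom.restrictNormal_commutes _ κ x
  { toFun := res
    map_one' := AlgEquiv.ext fun x => Subtype.ext <| coe_res 1 x
    map_mul' σ τ := AlgEquiv.ext fun x => Subtype.ext <| by
      rw [AlgEquiv.mul_apply, coe_res, coe_res, AlgEquiv.mul_apply]
      exact congrArg (fun y => (σ y : Ω)) (Subtype.ext (coe_res τ x).symm) }

theorem coe_restrictToNormal_apply [Normal F κ] (σ : Gal(adjoin K (κ : Set Ω) / K)) (x : κ) :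
    (restrictToNormal K σ x : Ω) = σ ⟨x, le_restrictScalars_adjoin K κ x.2⟩ :=
  AlgHom.restrictNormal_commutes _ κ x

theorem restrictToNormal_injective [Normal F κ] :
    Function.Injective (restrictToNormal K (κ := κ)) := by
  refine (injective_iff_map_eq_one _).2 fun σ hσ => AlgEquiv.ext fun y => Subtype.ext ?_
  have hval : (adjoin K (κ : Set Ω)).val.comp σ.toAlgHom = (adjoin K (κ : Set Ω)).val :=
    adjoin_algHom_ext K fun x hx => by
      have hx := coe_restrictToNormal_apply σ ⟨x, hx⟩
      rw [hσ] at hx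
      exact hx.symm
  exact DFunLike.congr_fun hval y

theorem restrictToNormal_surjective [FiniteDimensional F κ] [IsGalois F κ]
    (hdisj : κ ⊓ (⊥ : IntermediateField K Ω).restrictScalars F = ⊥) :
    Function.Surjective (restrictToNormal K (κ := κ)) := by
  suffices fixedField (restrictToNormal K (κ := κ)).range = ⊥ by
    rw [← MonoidHom.range_eq_top, ← fixingSubgroup_fixedField (restrictToNormal K).range, this,
      fixingSubgroup_bot]
  refine eq_bot_iff.2 fun x hx => ?_
  have hfixed (σ : Gal(adjoin K (κ : Set Ω) / K)) :
      σ ⟨x, le_restrictScalars_adjoin K κ x.2⟩ = ⟨x, le_restrictScalars_adjoin K κ x.2⟩ :=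
    Subtype.ext <| (coe_restrictToNormal_apply σ x).symm.trans
      (congrArg Subtype.val (hx ⟨_, σ, rfl⟩))
  have hK : (x : Ω) ∈ (⊥ : IntermediateField K Ω) := by
    obtain ⟨c, hc⟩ := mem_bot.1 ((IsGalois.mem_bot_iff_fixed _).2 hfixed)
    exact mem_bot.2 ⟨c, congrArg Subtype.val hc⟩
  obtain ⟨c, hc⟩ := mem_bot.1 (hdisj.le ⟨x.2, hK⟩)
  exact mem_bot.2 ⟨c, Subtype.ext hc⟩

theorem finrank_adjoin_eq_finrank [FiniteDimensional F κ] [IsGalois F κ]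
    (hdisj : κ ⊓ (⊥ : IntermediateField K Ω).restrictScalars F = ⊥) :
    Module.finrank K (adjoin K (κ : Set Ω)) = Module.finrank F κ := by
  rw [← IsGalois.card_aut_eq_finrank, ← IsGalois.card_aut_eq_finrank]
  exact Nat.card_congr (Equiv.ofBijective _
    ⟨restrictToNormal_injective, restrictToNormal_surjective hdisj⟩)

theorem extendScalars_le_sup_left {k Ω : Type*} [Field k] [Field Ω] [Algebra k Ω]
    (K E : IntermediateField k Ω) :
    extendScalars (le_sup_left : K ≤ K ⊔ E) = adjoin K (E : Set Ω) :=
  restrictScalars_injective k <| by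
    rw [extendScalars_restrictScalars, restrictScalars_adjoin_eq_sup, adjoin_self]

end IntermediateField

theorem compositum_galois_of_constant_extension_general
    {k Ω : Type*} [Field k] [Field Ω] [Algebra k Ω]
    (K : IntermediateField k Ω)
    (k' : IntermediateField k Ω)
    (hk' : ∀ x : Ω, x ∈ k' ↔ x ∈ K ∧ IsAlgebraic k x)
    (κ : IntermediateField ↥k' Ω) [FiniteDimensional ↥k' ↥κ] [IsGalois ↥k' ↥κ]
    (L' : IntermediateField ↥K Ω)
    (hL' : L' = IntermediateField.extendScalars
      (le_sup_left : K ≤ K ⊔ IntermediateField.restrictScalars k κ)) :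
    IsGalois ↥K ↥L' ∧ FiniteDimensional ↥K ↥L' ∧
      Module.finrank ↥K ↥L' = Module.finrank ↥k' ↥κ ∧
      ∃ res : (↥L' ≃ₐ[↥K] ↥L') →* (↥κ ≃ₐ[↥k'] ↥κ),
        (∀ σ (x : Ω) (hx : x ∈ κ) (hx' : x ∈ L'),
          (↑(res σ ⟨x, hx⟩) : Ω) = ↑(σ ⟨x, hx'⟩)) ∧
        Function.Bijective res := by
  have hsub : k' ≤ K := fun x hx => ((hk' x).1 hx).1
  let _ : Algebra k' K := (inclusion hsub).toAlgebra
  have : IsScalarTower k' K Ω := .of_algebraMap_eq fun _ => rfl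
  have : Algebra.IsAlgebraic k k' := ⟨fun y => isAlgebraic_iff.2 ((hk' y).1 y.2).2⟩
  have hdisj : κ ⊓ (⊥ : IntermediateField K Ω).restrictScalars k' = ⊥ := by
    refine eq_bot_iff.2 fun x ⟨hxκ, hxK⟩ => mem_bot.2 ⟨⟨x, (hk' x).2 ⟨?_, ?_⟩⟩, rfl⟩
    · obtain ⟨c, rfl⟩ := mem_bot.1 hxK
      exact c.2
    · exact (isAlgebraic_iff.1 (Algebra.IsAlgebraic.isAlgebraic (⟨x, hxκ⟩ : κ))).restrictScalars k
  subst hL'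
  rw [extendScalars_le_sup_left, coe_restrictScalars]
  exact ⟨inferInstance, inferInstance, finrank_adjoin_eq_finrank hdisj, restrictToNormal K,
    fun σ x hx _ => coe_restrictToNormal_apply σ ⟨x, hx⟩,
    restrictToNormal_injective, restrictToNormal_surjective hdisj⟩

/-- Let `k` be a perfect field, `K` a finitely generated field extension of `k`, `k′` the
algebraic closure of `k` in `K`, and `Ω` an algebraic closure of `K`. Let `κ ⊆ Ω` be a
finite Galois extension of `k′`. Then the compositum `K·κ` inside `Ω` is a finite Galois
extension of `K` of degree `[κ : k′]`, and the restriction homomorphism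
`Gal(K·κ/K) → Gal(κ/k′)` is a group isomorphism. -/
theorem compositum_galois_of_constant_extension
    {k Ω : Type*} [Field k] [PerfectField k] [Field Ω] [Algebra k Ω]
    (K : IntermediateField k Ω)
    (hfg : ∃ s : Finset Ω, IntermediateField.adjoin k (s : Set Ω) = K)
    [IsAlgClosed Ω] [Algebra.IsAlgebraic ↥K Ω]
    (k' : IntermediateField k Ω)
    (hk' : ∀ x : Ω, x ∈ k' ↔ x ∈ K ∧ IsAlgebraic k x)
    (κ : IntermediateField ↥k' Ω) [FiniteDimensional ↥k' ↥κ] [IsGalois ↥k' ↥κ]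
    (L' : IntermediateField ↥K Ω)
    (hL' : L' = IntermediateField.extendScalars
      (le_sup_left : K ≤ K ⊔ IntermediateField.restrictScalars k κ)) :
    IsGalois ↥K ↥L' ∧ FiniteDimensional ↥K ↥L' ∧
      Module.finrank ↥K ↥L' = Module.finrank ↥k' ↥κ ∧
      ∃ res : (↥L' ≃ₐ[↥K] ↥L') →* (↥κ ≃ₐ[↥k'] ↥κ),
        (∀ σ (x : Ω) (hx : x ∈ κ) (hx' : x ∈ L'),
          (↑(res σ ⟨x, hx⟩) : Ω) = ↑(σ ⟨x, hx'⟩)) ∧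
        Function.Bijective res :=
  compositum_galois_of_constant_extension_general K k' hk' κ L' hL'
end

section
/- Let p be a prime number. For each prime ℓ ≠ p, let N_p(ℓ) denote the index in the multiplicative group (ℤ/ℓℤ)* of the cyclic subgroup generated by the residue of p modulo ℓ. Then the function ℓ ↦ N_p(ℓ) is unbounded: for every positive integer C there exists a prime ℓ ≠ p with N_p(ℓ) > C. -/
/-!
If the index of `⟨p⟩` in `(ℤ/ℓℤ)ˣ` were at most `C` for every prime `ℓ ≠ p`, then every prime `ℓ`
modulo which `p` has order `n` would satisfy `ℓ ≤ C n + 1`. A prime factor of `Φ_n(p)` not dividing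
`n` is such a prime, and one exists when `4 ∣ n` and `n ≥ 40`: otherwise `Φ_n(p)` would be a
squarefree divisor of `n`, but it is larger than `n`. The orders `4j`, `M ≤ j < 2M`, would then be
realised by `M` distinct primes below `8(C + 1)M`, against Chebyshev's bound `π(x) = O(x / log x)`.
-/

open Finset Polynomial Filter
open scoped Nat Nat.Prime

namespace Nat

theorem prod_le_two_mul_prod_sub_one_sq {s : Finset ℕ} (hs : ∀ p ∈ s, p.Prime) :
    ∏ p ∈ s, p ≤ 2 * ∏ p ∈ s, (p - 1) ^ 2 := by
  calc ∏ p ∈ s, p ≤ ∏ p ∈ s, (p - 1) ^ 2 * if p = 2 then 2 else 1 := by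
        refine prod_le_prod' fun p hp => ?_
        have := (hs p hp).two_le
        split_ifs with h
        · subst h; norm_num
        · rw [mul_one, sq]
          exact (show p ≤ 2 * (p - 1) by omega).trans (Nat.mul_le_mul_right _ (by omega))
    _ ≤ 2 * ∏ p ∈ s, (p - 1) ^ 2 := by
        rw [prod_mul_distrib, prod_ite_eq', mul_comm]
        split_ifs <;> omega

theorem le_two_mul_totient_sq (n : ℕ) : n ≤ 2 * φ n ^ 2 := by
  rcases n.eq_zero_or_pos with rfl | hn
  · simp
  have hprime : ∀ p ∈ n.primeFactors, p.Prime := fun p => prime_of_mem_primeFactors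
  have hrad := prod_le_two_mul_prod_sub_one_sq hprime
  have hφ := totient_eq_div_primeFactors_mul n
  have hmul := totient_mul_prod_primeFactors n
  rw [prod_pow] at hrad
  set P := ∏ p ∈ n.primeFactors, (p - 1)
  have hP : 0 < P := prod_pos fun p hp => by have := (hprime p hp).two_le; omega
  have hPφ : P ≤ φ n := by
    rw [hφ]
    exact le_mul_of_one_le_left' <| (Nat.one_le_div_iff (prod_pos fun p hp => (hprime p hp).pos)).2
      (le_of_dvd hn (prod_primeFactors_dvd n))
  have : n * P ≤ 2 * φ n * P * P := by rw [← hmul]; nlinarith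
  have : n ≤ 2 * φ n * P := Nat.le_of_mul_le_mul_right (by nlinarith) hP
  nlinarith

theorem four_mul_sq_lt_three_pow {k : ℕ} (hk : 4 ≤ k) : 4 * k ^ 2 < 3 ^ k := by
  induction k, hk using Nat.le_induction with
  | base => norm_num
  | succ k hk ih => rw [pow_succ 3 k]; nlinarith

end Nat

theorem Nat.eventually_mul_primeCounting_lt (K : ℕ) : ∀ᶠ n : ℕ in atTop, K * π n < n := by
  have hlog : ∀ᶠ n : ℕ in atTop, K * (Real.log 4 + 1) < Real.log n :=
    (Real.tendsto_log_atTop.comp tendsto_natCast_atTop_atTop).eventually_gt_atTop _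
  have hπ := tendsto_natCast_atTop_atTop.eventually (Chebyshev.eventually_primeCounting_le one_pos)
  filter_upwards [hlog, hπ, eventually_gt_atTop 0] with n hlog hπ hn
  rw [Nat.floor_natCast] at hπ
  have hlog0 : 0 < Real.log n := lt_of_le_of_lt (by positivity) hlog
  have : (K : ℝ) * π n < n := calc
    (K : ℝ) * π n ≤ K * ((Real.log 4 + 1) * n / Real.log n) := by gcongr
    _ = K * (Real.log 4 + 1) * n / Real.log n := by ring
    _ < Real.log n * n / Real.log n := by gcongr
    _ = n := by field_simp
  exact_mod_cast this

theorem not_sq_dvd_geom_sum_of_dvd_sub_one {ℓ : ℕ} (hℓ : ℓ.Prime) {A : ℤ}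
    (hA : (ℓ : ℤ) ∣ A - 1) (h2 : ℓ = 2 → 4 ∣ A - 1) : ¬ (ℓ : ℤ) ^ 2 ∣ ∑ i ∈ range ℓ, A ^ i := by
  rcases hℓ.eq_two_or_odd' with rfl | hodd
  · have := h2 rfl
    simp only [sum_range_succ, sum_range_zero, pow_zero, pow_one, zero_add]
    norm_num
    omega
  · have hA' : ¬ (ℓ : ℤ) ∣ A := fun h =>
      hℓ.not_dvd_one (Int.natCast_dvd_natCast.1 (by simpa using Int.dvd_sub h hA))
    have := emultiplicity_geom_sum₂_eq_one (Nat.prime_iff_prime_int.1 hℓ) hodd hA hA'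
    simp only [one_pow, mul_one] at this
    rw [pow_dvd_iff_le_emultiplicity, this]
    norm_num

namespace Polynomial

theorem lt_cyclotomic_eval_of_four_dvd {a n : ℕ} (ha : 1 < a) (h4 : 4 ∣ n) (hn : 40 ≤ n) :
    (n : ℤ) < (cyclotomic n ℤ).eval (a : ℤ) := by
  obtain ⟨m, rfl⟩ : ∃ m, n = m * 2 := ⟨n / 2, by omega⟩
  have hexpand :
      (cyclotomic (m * 2) ℤ).eval (a : ℤ) = (cyclotomic m ℤ).eval ((a ^ 2 : ℕ) : ℤ) := by
    rw [← cyclotomic_expand_eq_cyclotomic Nat.prime_two (by omega) ℤ, expand_eval]; push_cast; rfl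
  have hlt := sub_one_pow_totient_lt_natAbs_cyclotomic_eval (n := m) (q := a ^ 2) (by omega)
    (by nlinarith)
  rw [← hexpand] at hlt
  have hpos : 0 < (cyclotomic (m * 2) ℤ).eval (a : ℤ) := cyclotomic_pos' _ (by exact_mod_cast ha)
  have hφ : 4 ≤ φ m := by nlinarith [Nat.le_two_mul_totient_sq m]
  have : m * 2 < (a ^ 2 - 1) ^ φ m := calc
    m * 2 ≤ 4 * φ m ^ 2 := by nlinarith [Nat.le_two_mul_totient_sq m]
    _ < 3 ^ φ m := Nat.four_mul_sq_lt_three_pow hφ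
    _ ≤ (a ^ 2 - 1) ^ φ m := Nat.pow_le_pow_left (le_tsub_of_add_le_right (by nlinarith)) _
  omega

theorem orderOf_eq_of_dvd_cyclotomic_eval {ℓ n : ℕ} [Fact ℓ.Prime] {a : ℤ}
    (hdvd : (ℓ : ℤ) ∣ (cyclotomic n ℤ).eval a) (hn : ¬ ℓ ∣ n) : orderOf (a : ZMod ℓ) = n := by
  have : NeZero (n : ZMod ℓ) := ⟨by rwa [Ne, ZMod.natCast_eq_zero_iff]⟩
  have hroot : (cyclotomic n (ZMod ℓ)).IsRoot (a : ZMod ℓ) := by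
    rwa [← map_cyclotomic_int, IsRoot, eval_intCast_map, eq_intCast,
      ZMod.intCast_zmod_eq_zero_iff_dvd]
  exact (isRoot_cyclotomic_iff.mp hroot).eq_orderOf.symm

theorem cyclotomic_eval_dvd_geom_sum {a : ℤ} {n ℓ : ℕ} (hℓ : ℓ.Prime) (hℓn : ℓ ∣ n)
    (ha : a ^ (n / ℓ) ≠ 1) : (cyclotomic n ℤ).eval a ∣ ∑ i ∈ range ℓ, (a ^ (n / ℓ)) ^ i := by
  rcases n.eq_zero_or_pos with rfl | hn
  · simp
  have hprop : n / ℓ ∈ n.properDivisors :=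
    Nat.mem_properDivisors.2 ⟨Nat.div_dvd_of_dvd hℓn, Nat.div_lt_self hn hℓ.one_lt⟩
  have h := eval_dvd (x := a) (X_pow_sub_one_mul_cyclotomic_dvd_X_pow_sub_one_of_dvd ℤ hprop)
  simp only [eval_mul, eval_sub, eval_pow, eval_X, eval_one] at h
  rwa [show a ^ n = (a ^ (n / ℓ)) ^ ℓ by rw [← pow_mul, Nat.div_mul_cancel hℓn],
    ← geom_sum_mul (a ^ (n / ℓ)) ℓ, mul_comm _ (_ - 1),
    mul_dvd_mul_iff_left (sub_ne_zero.2 ha)] at h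

/-- With `A = a ^ (n / ℓ)`, Fermat's little theorem gives `ℓ ∣ A - 1`, and `Φ_n(a)` divides
`1 + A + ⋯ + A ^ (ℓ - 1)`, which `ℓ` divides only once. -/
theorem not_sq_dvd_cyclotomic_eval {a n ℓ : ℕ} (ha : 1 < a) (h4 : 4 ∣ n) (hℓ : ℓ.Prime)
    (hℓn : ℓ ∣ n) : ¬ (ℓ : ℤ) ^ 2 ∣ (cyclotomic n ℤ).eval (a : ℤ) := by
  intro hsq
  have := Fact.mk hℓ
  rcases n.eq_zero_or_pos with rfl | hn
  · rw [cyclotomic_zero, eval_one] at hsq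
    exact (Nat.prime_iff_prime_int.1 hℓ).not_isUnit
      ((isUnit_pow_iff two_ne_zero).1 (isUnit_of_dvd_one hsq))
  have hpow : (ℓ : ℤ) ∣ (a : ℤ) ^ n - 1 := (dvd_pow_self _ two_ne_zero).trans <| hsq.trans <| by
    simpa using eval_dvd (x := (a : ℤ)) (cyclotomic.dvd_X_pow_sub_one n ℤ)
  have hA : (ℓ : ℤ) ∣ (a : ℤ) ^ (n / ℓ) - 1 := by
    rw [← ZMod.intCast_zmod_eq_zero_iff_dvd] at hpow ⊢
    push_cast at hpow ⊢
    rwa [← ZMod.pow_card ((a : ZMod ℓ) ^ (n / ℓ)), ← pow_mul, Nat.div_mul_cancel hℓn]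
  have hA4 : ℓ = 2 → 4 ∣ (a : ℤ) ^ (n / ℓ) - 1 := by
    rintro rfl
    have hodd : Odd (a : ℤ) := (Int.odd_pow' hn.ne').1 (Int.odd_iff.2 (by omega))
    obtain ⟨k, hk⟩ : ∃ k, n / 2 = 2 * k := ⟨n / 4, by omega⟩
    rw [hk, pow_mul']
    exact (show (4 : ℤ) ∣ 8 by norm_num).trans (Int.eight_dvd_sq_sub_one_of_odd hodd.pow)
  have hne : (a : ℤ) ^ (n / ℓ) ≠ 1 :=
    (one_lt_pow₀ (by exact_mod_cast ha) (Nat.div_pos (Nat.le_of_dvd hn hℓn) hℓ.pos).ne').ne'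
  exact not_sq_dvd_geom_sum_of_dvd_sub_one hℓ hA hA4
    (hsq.trans (cyclotomic_eval_dvd_geom_sum hℓ hℓn hne))

end Polynomial

theorem ZMod.le_mul_orderOf_add_one_of_index_le {ℓ C : ℕ} [Fact ℓ.Prime] {x : ZMod ℓ}
    (hx : x ≠ 0) (h : (ℓ - 1) / orderOf x ≤ C) : ℓ ≤ C * orderOf x + 1 := by
  have := Nat.mul_le_mul_right (orderOf x) h
  rw [Nat.div_mul_cancel (ZMod.orderOf_dvd_card_sub_one hx)] at this
  have := (Fact.out : ℓ.Prime).two_le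
  omega

theorem exists_prime_orderOf_natCast_eq {a n : ℕ} (ha : 1 < a) (h4 : 4 ∣ n) (hn : 40 ≤ n) :
    ∃ ℓ : ℕ, ℓ.Prime ∧ orderOf (a : ZMod ℓ) = n := by
  set Q := (cyclotomic n ℤ).eval (a : ℤ)
  have hQ : (n : ℤ) < Q := lt_cyclotomic_eval_of_four_dvd ha h4 hn
  obtain ⟨ℓ, hℓ, hℓn⟩ : ∃ ℓ ∈ Q.natAbs.primeFactors, ¬ ℓ ∣ n := by
    by_contra! h
    have hsqf : Squarefree Q.natAbs := Nat.squarefree_iff_prime_squarefree.2 fun ℓ hℓ hsq =>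
      not_sq_dvd_cyclotomic_eval ha h4 hℓ
        (h ℓ (Nat.mem_primeFactors.2 ⟨hℓ, dvd_of_mul_left_dvd hsq, by omega⟩))
        (by rw [sq]; exact Int.natCast_dvd.2 hsq)
    have hdvd : Q.natAbs ∣ n := by
      rw [← Nat.prod_primeFactors_of_squarefree hsqf, Nat.prod_primeFactors_dvd_iff (by omega)]
      exact fun ℓ hℓ => Nat.mem_primeFactors.2 ⟨Nat.prime_of_mem_primeFactors hℓ, h ℓ hℓ, by omega⟩
    have := Nat.le_of_dvd (by omega) hdvd
    omega
  have := Fact.mk (Nat.prime_of_mem_primeFactors hℓ)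
  refine ⟨ℓ, this.out, ?_⟩
  exact_mod_cast orderOf_eq_of_dvd_cyclotomic_eval
    (Int.natCast_dvd.2 (Nat.dvd_of_mem_primeFactors hℓ)) hℓn

/-- Let `p` be a prime. For a prime `ℓ ≠ p`, the index in `(ℤ/ℓℤ)*` of the cyclic
subgroup generated by `p mod ℓ` equals `(ℓ - 1)/ordℓ(p)`.  This index is unbounded as a
function of `ℓ`: for every positive integer `C` there is a prime `ℓ ≠ p` for which it
exceeds `C`. -/
theorem index_of_powers_of_p_unbounded (p : ℕ) (hp : p.Prime) :
    ∀ C : ℕ, 0 < C → ∃ ℓ : ℕ, ℓ.Prime ∧ ℓ ≠ p ∧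
      C < (ℓ - 1) / orderOf (p : ZMod ℓ) := by
  intro C _
  by_contra! hbounded
  obtain ⟨N, hN⟩ := eventually_atTop.1 (Nat.eventually_mul_primeCounting_lt (8 * C + 8))
  set M := N + 10
  have hsurj : Set.SurjOn (fun ℓ => orderOf (p : ZMod ℓ)) (Nat.primesLE ((8 * C + 8) * M))
      ((Ico M (2 * M)).image (4 * ·)) := by
    intro n hn
    obtain ⟨j, hj, rfl⟩ := mem_image.1 hn
    rw [mem_Ico] at hj
    obtain ⟨ℓ, hℓ, hord⟩ := exists_prime_orderOf_natCast_eq hp.one_lt (dvd_mul_right 4 j) (by omega)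
    have := Fact.mk hℓ
    have hpℓ : (p : ZMod ℓ) ≠ 0 := fun h => by simp [h] at hord; omega
    have hℓp : ℓ ≠ p := by rintro rfl; simp at hpℓ
    have hle := ZMod.le_mul_orderOf_add_one_of_index_le hpℓ (hbounded ℓ hℓ hℓp)
    rw [hord] at hle
    exact ⟨ℓ, Nat.mem_primesLE.2 ⟨by nlinarith, hℓ⟩, hord⟩
  have hcard := card_le_card_of_surjOn _ hsurj
  rw [card_image_of_injective _ (mul_right_injective₀ four_ne_zero), Nat.card_Ico,
    Nat.primesLE_card_eq_primeCounting] at hcard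
  have := Nat.lt_of_mul_lt_mul_left (hN ((8 * C + 8) * M) (by simp only [M]; nlinarith))
  omega
end

section
/- Let g ≥ 1 be an integer, p an odd prime, and set N(g) = (2g)^{2g} − (1−2g)^{2g−1} ∈ ℤ. Suppose α is an element of an algebraically closed field of characteristic p that is a multiple root of x^{2g} − x − 1, i.e., a common root of x^{2g} − x − 1 and of its derivative 2g·x^{2g−1} − 1. Then p divides neither 2g nor 2g−1, α lies in the prime field 𝔽_p and equals 2g·(1−2g)^{−1}, and p divides N(g). -/
/-- Let `g ≥ 1`, let `p` be an odd prime, and let `α` be a multiple root of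
`x^(2g) - x - 1` in an algebraically closed field `F` of characteristic `p`, i.e. a
common root of `x^(2g) - x - 1` and its derivative `2g·x^(2g-1) - 1`. Then `p` divides
neither `2g` nor `2g - 1`, `α` lies in the prime field `𝔽_p` and equals
`2g·(1 - 2g)⁻¹`, and `p` divides `N(g) = (2g)^(2g) - (1-2g)^(2g-1)`. -/
theorem multiple_root_facts (g p : ℕ) (hg : 1 ≤ g) (hp : p.Prime) (hodd : p ≠ 2)
    {F : Type*} [Field F] [IsAlgClosed F] [CharP F p] (α : F)
    (h1 : α ^ (2 * g) - α - 1 = 0)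
    (h2 : (2 * g : F) * α ^ (2 * g - 1) - 1 = 0) :
    ¬ (p ∣ 2 * g) ∧ ¬ (p ∣ 2 * g - 1) ∧
      (∃ a : ZMod p, ZMod.castHom (dvd_refl p) F a = α) ∧
      α = (2 * g : F) * ((1 : F) - 2 * g)⁻¹ ∧
      (p : ℤ) ∣ (2 * g : ℤ) ^ (2 * g) - (1 - 2 * g : ℤ) ^ (2 * g - 1) := by
  haveI := Fact.mk hp
  have hA : (2 * g : F) ≠ 0 := by
    intro h
    rw [h, zero_mul] at h2
    simp at h2
  have hgF : ((2 * g : ℕ) : F) = 2 * g := by push_cast; ring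
  have hpA : ¬ (p ∣ 2 * g) := by
    intro h
    exact hA (hgF ▸ (CharP.cast_eq_zero_iff F p _).mpr h)
  obtain ⟨m, hm⟩ : ∃ m : ℕ, 2 * g = m + 1 := ⟨2 * g - 1, by omega⟩
  have hm' : 2 * g - 1 = m := by omega
  rw [hm'] at h2
  rw [hm] at h1
  -- α * (1 - 2g) = 2g
  have hαB : α * (1 - 2 * g) = 2 * g := by
    linear_combination (2 * g : F) * h1 - α * h2
  have hB : ((1 : F) - 2 * g) ≠ 0 := by
    intro h
    rw [h, mul_zero] at hαB
    exact hA hαB.symm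
  have h2' : (2 * g : F) * α ^ m = 1 := by linear_combination h2
  have key : (2 * g : F) ^ (m + 1) = (1 - 2 * g) ^ m := by
    have hs : (α * (1 - 2 * g)) ^ m = (2 * g : F) ^ m := by rw [hαB]
    calc (2 * g : F) ^ (m + 1) = (2 * g) * (2 * g) ^ m := by ring
      _ = (2 * g) * (α * (1 - 2 * g)) ^ m := by rw [hs]
      _ = ((2 * g) * α ^ m) * (1 - 2 * g) ^ m := by rw [mul_pow]; ring
      _ = (1 - 2 * g) ^ m := by rw [h2', one_mul]
  have hαeq : α = (2 * g : F) * ((1 : F) - 2 * g)⁻¹ := by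
    field_simp
    linear_combination hαB
  refine ⟨hpA, ?_, ?_, hαeq, ?_⟩
  · intro h
    apply hB
    have h0 : ((2 * g - 1 : ℕ) : F) = 0 := (CharP.cast_eq_zero_iff F p _).mpr h
    have : ((2 * g : ℕ) : F) = 1 := by
      rw [show 2 * g = (2 * g - 1) + 1 by omega, Nat.cast_add, h0, Nat.cast_one, zero_add]
    rw [hgF] at this
    rw [this, sub_self]
  · refine ⟨(2 * g : ZMod p) * ((1 : ZMod p) - 2 * g)⁻¹, ?_⟩
    rw [map_mul, map_inv₀, map_sub, map_one, map_mul, map_natCast, map_ofNat]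
    exact hαeq.symm
  · rw [← CharP.intCast_eq_zero_iff F p]
    push_cast
    rw [hm]
    simp only [Nat.add_sub_cancel]
    rw [sub_eq_zero]
    exact key
end

section
/- Let g ≥ 1 be an integer and p an odd prime. Then the polynomial x^{2g} − x − 1 with coefficients in ℤ/pℤ is squarefree (equivalently, has no multiple root in an algebraic closure of 𝔽_p) if and only if p does not divide the integer N(g) = (2g)^{2g} − (1−2g)^{2g−1}. In other words, the odd prime divisors of the discriminant of x^{2g} − x − 1 are exactly the odd prime divisors of N(g). -/
open Polynomial

/-!
Squarefreeness of `f = X ^ n - X - 1` over a perfect field is coprimality of `f` and `f'`, i.e.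
the absence of a common root in an algebraic closure. The identity
`n * f - X * f' = (1 - n) * X - n` pins a common root down to `a = n / (1 - n)`, and
`f'(a) = 0` is then exactly `n ^ n = (1 - n) ^ (n - 1)`; for `n = 2g` this says `p ∣ N(g)`.
-/

theorem exists_common_root_X_pow_sub_X_sub_one_iff {L : Type*} [Field L] {n : ℕ} (hn : 2 ≤ n) :
    (∃ a : L, a ^ n - a - 1 = 0 ∧ n * a ^ (n - 1) - 1 = 0) ↔
      (n : L) ^ n = (1 - n) ^ (n - 1) := by
  have hpow (a : L) : a ^ n = a * a ^ (n - 1) := by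
    rw [← pow_succ', Nat.sub_add_cancel (by omega)]
  have hcomb (a : L) : n * (a ^ n - a - 1) - a * (n * a ^ (n - 1) - 1) = (1 - n) * a - n := by
    rw [hpow]; ring
  constructor
  · rintro ⟨a, hf, hf'⟩
    have ha : (1 - n) * a = n := by
      rw [← sub_eq_zero, ← hcomb, hf, hf']; ring
    calc (n : L) ^ n = n * ((1 - n) * a) ^ (n - 1) := by
          rw [ha, ← pow_succ', Nat.sub_add_cancel (by omega)]
      _ = (1 - n) ^ (n - 1) * (n * a ^ (n - 1)) := by rw [mul_pow]; ring
      _ = (1 - n) ^ (n - 1) := by rw [sub_eq_zero.mp hf', mul_one]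
  · intro h
    have h1n : (1 - n : L) ≠ 0 := by
      intro h0
      rw [h0, zero_pow (by omega), ← (sub_eq_zero.mp h0), one_pow] at h
      exact one_ne_zero h
    have hn0 : (n : L) ≠ 0 := by
      intro h0
      rw [h0, zero_pow (by omega), sub_zero, one_pow] at h
      exact zero_ne_one h
    set a : L := n / (1 - n)
    have hf' : n * a ^ (n - 1) - 1 = 0 := by
      rw [div_pow, ← mul_div_assoc, ← pow_succ', Nat.sub_add_cancel (by omega), h,
        div_self (pow_ne_zero _ h1n), sub_self]
    refine ⟨a, ?_, hf'⟩
    have hcomb_a := hcomb a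
    rw [hf', mul_zero, sub_zero, mul_div_cancel₀ _ h1n, sub_self] at hcomb_a
    exact (mul_eq_zero.mp hcomb_a).resolve_left hn0

theorem squarefree_X_pow_sub_X_sub_one_iff {k : Type*} [Field k] [PerfectField k] {n : ℕ}
    (hn : 2 ≤ n) :
    Squarefree ((X : k[X]) ^ n - X - 1) ↔ (n : k) ^ n ≠ (1 - n) ^ (n - 1) := by
  rw [← PerfectField.separable_iff_squarefree, separable_def,
    isCoprime_iff_aeval_ne_zero_of_isAlgClosed k (AlgebraicClosure k)]
  have hcast : ((n : k) ^ n = (1 - n) ^ (n - 1)) ↔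
      ((n : AlgebraicClosure k) ^ n = (1 - n) ^ (n - 1)) := by
    rw [← (algebraMap k (AlgebraicClosure k)).injective.eq_iff]
    simp only [map_pow, map_sub, map_one, map_natCast]
  rw [ne_eq, hcast, ← exists_common_root_X_pow_sub_X_sub_one_iff hn]
  simp [derivative_X_pow, imp_iff_not_or]

theorem squarefree_iff_not_dvd_N_general (g p : ℕ) (hg : 1 ≤ g) (hp : p.Prime) :
    Squarefree ((X : Polynomial (ZMod p)) ^ (2 * g) - X - 1) ↔
      ¬ ((p : ℤ) ∣ (2 * g : ℤ) ^ (2 * g) - (1 - 2 * g : ℤ) ^ (2 * g - 1)) := by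
  have : Fact p.Prime := ⟨hp⟩
  rw [squarefree_X_pow_sub_X_sub_one_iff (by omega), ← ZMod.intCast_zmod_eq_zero_iff_dvd,
    Int.cast_sub, sub_eq_zero]
  push_cast
  rfl

/-- Let `g ≥ 1` and let `p` be an odd prime. The polynomial `x^(2g) - x - 1` over
`ℤ/pℤ` is squarefree (equivalently, has no multiple root in an algebraic closure of
`𝔽_p`) if and only if `p` does not divide `N(g) = (2g)^(2g) - (1-2g)^(2g-1)`. -/
theorem squarefree_iff_not_dvd_N (g p : ℕ) (hg : 1 ≤ g) (hp : p.Prime) (hodd : p ≠ 2) :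
    Squarefree ((X : Polynomial (ZMod p)) ^ (2 * g) - X - 1) ↔
      ¬ ((p : ℤ) ∣ (2 * g : ℤ) ^ (2 * g) - (1 - 2 * g : ℤ) ^ (2 * g - 1)) :=
  squarefree_iff_not_dvd_N_general g p hg hp
end
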